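/- Let k have characteristic zero, n ≥ 3, and let D, D' be the derivations on k[x_1,…,x_n] with D(x_j) = (n-j)·x_{j+1}, D'(x_j) = (j-1)·x_{j-1} (boundary terms zero). For any a ∈ k with a ≠ 0, exp((1-a)D) ∘ exp(-D') ∘ exp((1-a⁻¹)D) ∘ exp(aD') = μ_{a⁻¹}, where μ_b is the linear automorphism μ_b(x_i) = b^{n-2i+1}·x_i. -/

import Mathlib

/-!
Send the linear form `x_m` (indices from `0`) to the binary form `X ^ (n - 1 - m) * Y ^ m` of
degree `n - 1`. On linear forms `D` and `D'` then act as `Y ∂_X` and `X ∂_Y`, so `exp (t D)` and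
`exp (s D')` become the substitutions `X ↦ X + t Y` and `Y ↦ Y + s X`. The composite is the
substitution of the matrix product
`[[1, 1 - a], [0, 1]] [[1, 0], [-1, 1]] [[1, 1 - a⁻¹], [0, 1]] [[1, 0], [a, 1]] = diag (a⁻¹, a)`,
which multiplies `X ^ (n - 1 - m) * Y ^ m` by `a⁻¹ ^ (n - 1 - 2 m)`, exactly as `μ` does. All maps
involved preserve linear forms, and the map to binary forms is injective on them.
-/

open MvPolynomial

/-- `e` is the exponential `exp d` of the locally nilpotent map `d`:
its value on each `f` is the (eventually constant) sum `∑ᵢ d^[i] f / i!`. -/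
def IsExpOf (k : Type*) [Field k] {P : Type*} [AddCommMonoid P] [Module k P]
    (d : P → P) (e : P → P) : Prop :=
  ∀ f : P, ∃ N : ℕ, ∀ M : ℕ, N ≤ M →
    e f = ∑ i ∈ Finset.range M, ((Nat.factorial i : k)⁻¹) • d^[i] f

open Finset Nat

theorem LinearIndependent.injOn_span_of_comp {R M M' ι : Type*} [Semiring R] [AddCommMonoid M]
    [Module R M] [AddCommMonoid M'] [Module R M'] {f : M →ₗ[R] M'} {v : ι → M}
    (h : LinearIndependent R (f ∘ v)) : Set.InjOn f (Submodule.span R (Set.range v)) := by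
  rw [← Finsupp.range_linearCombination]
  rintro _ ⟨l, rfl⟩ _ ⟨l', rfl⟩ hll'
  exact congrArg _ (h (by
    simpa only [Finsupp.linearCombination_linear_comp, LinearMap.comp_apply] using hll'))

namespace IsExpOf

variable {k M : Type*} [Field k] [AddCommMonoid M] [Module k M] {d e : M → M}

theorem eq_sum_range_of_iterate_eq_zero (he : IsExpOf k d e) {f : M} {N : ℕ}
    (hN : ∀ i, N ≤ i → d^[i] f = 0) :
    e f = ∑ i ∈ range N, ((i ! : k)⁻¹) • d^[i] f := by
  obtain ⟨N₀, hN₀⟩ := he f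
  rw [hN₀ (max N₀ N) (le_max_left _ _)]
  refine (sum_subset (range_subset_range.2 (le_max_right _ _)) fun i _ hi => ?_).symm
  rw [hN i (by simpa using hi), smul_zero]

theorem mapsTo (he : IsExpOf k d e) {S : Submodule k M} (hd : Set.MapsTo d S S) :
    Set.MapsTo e S S := by
  intro f hf
  obtain ⟨N, hN⟩ := he f
  rw [hN N le_rfl]
  exact S.sum_mem fun i _ => S.smul_mem _ (hd.iterate i hf)

end IsExpOf

section RaisingOperator

variable {k M : Type*} [Field k] [AddCommMonoid M] [Module k M] (d : M →ₗ[k] M) {m : ℕ}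
  {v : ℕ → M}

/- In the hypothesis `hd` the subtraction `m - j` is truncated: `d` kills `v j` for `j ≥ m`,
so the vectors `v j` with `j > m` never enter. -/
theorem iterate_smul_apply_eq_descFactorial_smul (hd : ∀ j, d (v j) = (m - j) • v (j + 1))
    (t : k) (j i : ℕ) :
    (fun p => t • d p)^[i] (v j) = (t ^ i * (m - j).descFactorial i : k) • v (j + i) := by
  induction i with
  | zero => simp
  | succ i ih =>
    rw [Function.iterate_succ_apply', ih, map_smul, hd, ← Nat.cast_smul_eq_nsmul k, smul_smul,
      smul_smul, Nat.descFactorial_succ, Nat.sub_sub, ← add_assoc]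
    push_cast
    congr 1
    ring

variable [CharZero k]

theorem IsExpOf.apply_eq_sum_choose (hd : ∀ j, d (v j) = (m - j) • v (j + 1)) {t : k}
    {e : M → M} (he : IsExpOf k (fun p => t • d p) e) (j : ℕ) :
    e (v j) = ∑ i ∈ range (m - j + 1), ((m - j).choose i * t ^ i : k) • v (j + i) := by
  rw [he.eq_sum_range_of_iterate_eq_zero (N := m - j + 1) fun i hi => by
    rw [iterate_smul_apply_eq_descFactorial_smul d hd,
      Nat.descFactorial_eq_zero_iff_lt.2 (by omega)]
    simp]
  refine sum_congr rfl fun i _ => ?_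
  rw [iterate_smul_apply_eq_descFactorial_smul d hd, smul_smul,
    Nat.descFactorial_eq_factorial_mul_choose]
  congr 1
  have : (i ! : k) ≠ 0 := Nat.cast_ne_zero.2 i.factorial_ne_zero
  push_cast
  field_simp

theorem IsExpOf.map_apply_eq_add_pow {A F : Type*} [CommRing A] [Algebra k A] [FunLike F M A]
    [LinearMapClass F k M A] (Φ : F) {x y : A} (hd : ∀ j, d (v j) = (m - j) • v (j + 1))
    (hΦ : ∀ l ≤ m, Φ (v l) = x ^ (m - l) * y ^ l) {t : k}
    {e : M → M} (he : IsExpOf k (fun p => t • d p) e) {j : ℕ} (hj : j ≤ m) :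
    Φ (e (v j)) = (x + t • y) ^ (m - j) * y ^ j := by
  rw [he.apply_eq_sum_choose d hd, map_sum, add_comm x, add_pow, sum_mul]
  refine sum_congr rfl fun i hi => ?_
  rw [mem_range] at hi
  rw [map_smul, hΦ _ (by omega), ← Nat.sub_sub, pow_add]
  simp only [Algebra.smul_def, map_mul, map_pow, map_natCast]
  ring

end RaisingOperator

section BinaryForms

variable {R : Type*} [CommSemiring R]

noncomputable def linearForms (σ R : Type*) [CommSemiring R] : Submodule R (MvPolynomial σ R) :=
  Submodule.span R (Set.range X)

theorem mapsTo_linearForms {σ : Type*} (L : MvPolynomial σ R →ₗ[R] MvPolynomial σ R)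
    (hL : ∀ i, L (X i) ∈ linearForms σ R) (t : R) :
    Set.MapsTo (fun p => t • L p) (linearForms σ R) (linearForms σ R) := fun _ hp =>
  Submodule.smul_mem _ t (Submodule.span_le (p := (linearForms σ R).comap L)
    |>.2 (Set.range_subset_iff.2 hL) hp)

variable (R) in
noncomputable def binaryFormMap (n : ℕ) : MvPolynomial (Fin n) R →ₐ[R] MvPolynomial (Fin 2) R :=
  aeval fun m => X 0 ^ (n - 1 - (m : ℕ)) * X 1 ^ (m : ℕ)

theorem linearIndependent_binaryFormMap_X (n : ℕ) :
    LinearIndependent R (binaryFormMap R n ∘ X) := by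
  let exponent (m : Fin n) : Fin 2 →₀ ℕ :=
    Finsupp.single 0 (n - 1 - m) + Finsupp.single 1 (m : ℕ)
  have hexponent : Function.Injective exponent := fun m m' h =>
    Fin.ext (by simpa [exponent] using DFunLike.congr_fun h 1)
  have h := (basisMonomials (Fin 2) R).linearIndependent.comp exponent hexponent
  rw [coe_basisMonomials] at h
  have hcomp : binaryFormMap R n ∘ X = (fun s => monomial s 1) ∘ exponent := by
    ext1 m
    simp [binaryFormMap, exponent, X_pow_eq_monomial, monomial_mul]
  rw [hcomp]
  exact h

theorem binaryFormMap_injOn (n : ℕ) :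
    Set.InjOn (binaryFormMap R n) (linearForms (Fin n) R) :=
  (linearIndependent_binaryFormMap_X n).injOn_span_of_comp (f := (binaryFormMap R n).toLinearMap)

theorem algHom_ext_of_binaryFormMap {n : ℕ}
    {f g : MvPolynomial (Fin n) R →ₐ[R] MvPolynomial (Fin n) R}
    (hf : ∀ i, f (X i) ∈ linearForms (Fin n) R) (hg : ∀ i, g (X i) ∈ linearForms (Fin n) R)
    (h : ∀ p, binaryFormMap R n (f p) = binaryFormMap R n (g p)) : f = g :=
  algHom_ext fun i => binaryFormMap_injOn n (hf i) (hg i) (h _)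

noncomputable def shearX (t : R) : MvPolynomial (Fin 2) R →ₐ[R] MvPolynomial (Fin 2) R :=
  aeval ![X 0 + t • X 1, X 1]

noncomputable def shearY (s : R) : MvPolynomial (Fin 2) R →ₐ[R] MvPolynomial (Fin 2) R :=
  aeval ![X 0, X 1 + s • X 0]

noncomputable def diagonalScaling (b c : R) : MvPolynomial (Fin 2) R →ₐ[R] MvPolynomial (Fin 2) R :=
  aeval ![b • X 0, c • X 1]

theorem shearX_shearY_shearX_shearY {k : Type*} [Field k] {a : k} (ha : a ≠ 0)
    (q : MvPolynomial (Fin 2) k) :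
    shearX (1 - a) (shearY (-1) (shearX (1 - a⁻¹) (shearY a q))) = diagonalScaling a⁻¹ a q := by
  suffices h : ((shearX (1 - a)).comp (shearY (-1))).comp ((shearX (1 - a⁻¹)).comp (shearY a))
      = diagonalScaling a⁻¹ a from DFunLike.congr_fun h q
  refine algHom_ext fun i => ?_
  fin_cases i <;>
    simp [shearX, shearY, diagonalScaling] <;> match_scalars <;> field_simp <;> ring

theorem binaryFormMap_apply_of_apply_X_eq_zpow_smul {k : Type*} [Field k] {n : ℕ} {a : k}
    (ha : a ≠ 0) {μ : MvPolynomial (Fin n) k →ₐ[k] MvPolynomial (Fin n) k}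
    (hμ : ∀ i : Fin n, μ (X i) = (a⁻¹ ^ ((n : ℤ) - 2 * ((i : ℕ) : ℤ) - 1)) • X i)
    (p : MvPolynomial (Fin n) k) :
    binaryFormMap k n (μ p) = diagonalScaling a⁻¹ a (binaryFormMap k n p) := by
  suffices h : (binaryFormMap k n).comp μ = (diagonalScaling a⁻¹ a).comp (binaryFormMap k n) from
    DFunLike.congr_fun h p
  refine algHom_ext fun i => ?_
  have hexp : a⁻¹ ^ ((n : ℤ) - 2 * ((i : ℕ) : ℤ) - 1) = a⁻¹ ^ (n - 1 - (i : ℕ)) * a ^ (i : ℕ) := by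
    rw [show (n : ℤ) - 2 * ((i : ℕ) : ℤ) - 1 = ((n - 1 - i : ℕ) : ℤ) - (i : ℕ) by omega,
      zpow_sub₀ (inv_ne_zero ha), zpow_natCast, zpow_natCast, div_eq_mul_inv, ← inv_pow, inv_inv]
  simp [binaryFormMap, diagonalScaling, hμ, hexp, smul_pow, mul_smul]
  exact smul_comm _ _ _

end BinaryForms

section Derivations

variable {k : Type*} [Field k] {n : ℕ}

noncomputable def varOrZero (n j : ℕ) : MvPolynomial (Fin n) k :=
  if h : j < n then X ⟨j, h⟩ else 0

theorem varOrZero_of_lt {j : ℕ} (h : j < n) :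
    (varOrZero n j : MvPolynomial (Fin n) k) = X ⟨j, h⟩ :=
  dif_pos h

theorem varOrZero_mem_linearForms (j : ℕ) :
    (varOrZero n j : MvPolynomial (Fin n) k) ∈ linearForms (Fin n) k := by
  unfold varOrZero
  split_ifs
  · exact Submodule.subset_span ⟨_, rfl⟩
  · exact zero_mem _

theorem binaryFormMap_varOrZero {j : ℕ} (h : j < n) :
    binaryFormMap k n (varOrZero n j) = X 0 ^ (n - 1 - j) * X 1 ^ j := by
  rw [varOrZero_of_lt h, binaryFormMap, aeval_X]

variable (D : Derivation k (MvPolynomial (Fin n) k) (MvPolynomial (Fin n) k))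

theorem apply_varOrZero_of_raising (hD : ∀ j : Fin n, D (X j) =
      if h : (j : ℕ) + 1 < n then (n - ((j : ℕ) + 1)) • X (⟨(j : ℕ) + 1, h⟩ : Fin n) else 0)
    (j : ℕ) : D (varOrZero n j) = (n - 1 - j) • varOrZero n (j + 1) := by
  unfold varOrZero
  split_ifs with hj hj'
  · rw [hD, dif_pos hj', Nat.sub_sub, add_comm 1]
  · rw [hD, dif_neg hj', smul_zero]
  · omega
  · rw [map_zero, smul_zero]

theorem apply_varOrZero_of_lowering (hD' : ∀ j : Fin n, D (X j) = if h : 0 < (j : ℕ) then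
      (j : ℕ) • X (⟨(j : ℕ) - 1, (Nat.sub_lt h Nat.one_pos).trans j.2⟩ : Fin n) else 0)
    (j : ℕ) : D (varOrZero n (n - 1 - j)) = (n - 1 - j) • varOrZero n (n - 1 - (j + 1)) := by
  unfold varOrZero
  split_ifs with hj hj'
  · rw [hD']
    split_ifs with hpos
    · congr 2
    · rw [show n - 1 - j = 0 from Nat.eq_zero_of_not_pos hpos, zero_smul]
  · omega
  · omega
  · rw [map_zero, smul_zero]

theorem mapsTo_linearForms_of_isExpOf_raising (hD : ∀ j : Fin n, D (X j) =
      if h : (j : ℕ) + 1 < n then (n - ((j : ℕ) + 1)) • X (⟨(j : ℕ) + 1, h⟩ : Fin n) else 0)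
    {t : k} {ε : MvPolynomial (Fin n) k → MvPolynomial (Fin n) k}
    (he : IsExpOf k (fun p => t • D p) ε) :
    Set.MapsTo ε (linearForms (Fin n) k) (linearForms (Fin n) k) :=
  he.mapsTo (d := fun p => t • (D : MvPolynomial (Fin n) k →ₗ[k] MvPolynomial (Fin n) k) p) <|
    mapsTo_linearForms _ (fun i => by
      rw [Derivation.coeFn_coe, ← varOrZero_of_lt i.2, apply_varOrZero_of_raising D hD]
      exact Submodule.smul_of_tower_mem _ _ (varOrZero_mem_linearForms _)) t

theorem mapsTo_linearForms_of_isExpOf_lowering (hD' : ∀ j : Fin n, D (X j) = if h : 0 < (j : ℕ) then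
      (j : ℕ) • X (⟨(j : ℕ) - 1, (Nat.sub_lt h Nat.one_pos).trans j.2⟩ : Fin n) else 0)
    {s : k} {ε : MvPolynomial (Fin n) k → MvPolynomial (Fin n) k}
    (he : IsExpOf k (fun p => s • D p) ε) :
    Set.MapsTo ε (linearForms (Fin n) k) (linearForms (Fin n) k) :=
  he.mapsTo (d := fun p => s • (D : MvPolynomial (Fin n) k →ₗ[k] MvPolynomial (Fin n) k) p) <|
    mapsTo_linearForms _ (fun i => by
      rw [Derivation.coeFn_coe, ← varOrZero_of_lt i.2,
        show (i : ℕ) = n - 1 - (n - 1 - i) by omega, apply_varOrZero_of_lowering D hD']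
      exact Submodule.smul_of_tower_mem _ _ (varOrZero_mem_linearForms _)) s

variable [CharZero k] {ε : MvPolynomial (Fin n) k →ₐ[k] MvPolynomial (Fin n) k}

theorem binaryFormMap_apply_of_isExpOf_raising (hD : ∀ j : Fin n, D (X j) =
      if h : (j : ℕ) + 1 < n then (n - ((j : ℕ) + 1)) • X (⟨(j : ℕ) + 1, h⟩ : Fin n) else 0)
    {t : k} (he : IsExpOf k (fun p => t • D p) ε) (p : MvPolynomial (Fin n) k) :
    binaryFormMap k n (ε p) = shearX t (binaryFormMap k n p) := by
  suffices h : (binaryFormMap k n).comp ε = (shearX t).comp (binaryFormMap k n) from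
    DFunLike.congr_fun h p
  refine algHom_ext fun j => ?_
  have hjn := j.2
  have he' : IsExpOf k (fun p => t • (D : MvPolynomial (Fin n) k →ₗ[k] _) p) ε := he
  have hd : ∀ l, (D : MvPolynomial (Fin n) k →ₗ[k] MvPolynomial (Fin n) k) (varOrZero n l) =
      (n - 1 - l) • varOrZero n (l + 1) :=
    apply_varOrZero_of_raising D hD
  rw [AlgHom.comp_apply, ← varOrZero_of_lt j.2,
    he'.map_apply_eq_add_pow _ (binaryFormMap k n) hd
      (fun l hl => binaryFormMap_varOrZero (by omega)) (by omega),
    AlgHom.comp_apply, binaryFormMap_varOrZero j.2]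
  simp [shearX]

theorem binaryFormMap_apply_of_isExpOf_lowering (hD' : ∀ j : Fin n, D (X j) = if h : 0 < (j : ℕ) then
      (j : ℕ) • X (⟨(j : ℕ) - 1, (Nat.sub_lt h Nat.one_pos).trans j.2⟩ : Fin n) else 0)
    {s : k} (he : IsExpOf k (fun p => s • D p) ε) (p : MvPolynomial (Fin n) k) :
    binaryFormMap k n (ε p) = shearY s (binaryFormMap k n p) := by
  suffices h : (binaryFormMap k n).comp ε = (shearY s).comp (binaryFormMap k n) from
    DFunLike.congr_fun h p
  refine algHom_ext fun j => ?_
  have he' : IsExpOf k (fun p => s • (D : MvPolynomial (Fin n) k →ₗ[k] _) p) ε := he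
  have hd : ∀ l, (D : MvPolynomial (Fin n) k →ₗ[k] MvPolynomial (Fin n) k)
      (varOrZero n (n - 1 - l)) = (n - 1 - l) • varOrZero n (n - 1 - (l + 1)) :=
    apply_varOrZero_of_lowering D hD'
  have hΦ : ∀ l ≤ n - 1,
      binaryFormMap k n (varOrZero n (n - 1 - l)) = X 1 ^ (n - 1 - l) * X 0 ^ l := fun l hl => by
    rw [binaryFormMap_varOrZero (by have := j.2; omega), Nat.sub_sub_self hl, mul_comm]
  have hj : (j : ℕ) = n - 1 - (n - 1 - j) := by omega
  rw [AlgHom.comp_apply, ← varOrZero_of_lt j.2, hj,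
    he'.map_apply_eq_add_pow _ (binaryFormMap k n) hd hΦ (Nat.sub_le _ _), AlgHom.comp_apply,
    ← hj, binaryFormMap_varOrZero j.2]
  simp [shearY, mul_comm]

end Derivations

theorem exp_composition_eq_mu (k : Type*) [Field k] [CharZero k] (n : ℕ)
    (D D' : Derivation k (MvPolynomial (Fin n) k) (MvPolynomial (Fin n) k))
    (hD : ∀ j : Fin n, D (X j) =
      if h : (j : ℕ) + 1 < n then (n - ((j : ℕ) + 1)) • X (⟨(j : ℕ) + 1, h⟩ : Fin n) else 0)
    (hD' : ∀ j : Fin n, D' (X j) =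
      if h : 0 < (j : ℕ) then (j : ℕ) • X (⟨(j : ℕ) - 1, by omega⟩ : Fin n) else 0)
    (a : k) (ha : a ≠ 0)
    (ε₁ ε₂ ε₃ ε₄ μ : MvPolynomial (Fin n) k →ₐ[k] MvPolynomial (Fin n) k)
    (hε₁ : IsExpOf k (fun p => (1 - a) • D p) ⇑ε₁)
    (hε₂ : IsExpOf k (fun p => -(D' p)) ⇑ε₂)
    (hε₃ : IsExpOf k (fun p => (1 - a⁻¹) • D p) ⇑ε₃)
    (hε₄ : IsExpOf k (fun p => a • D' p) ⇑ε₄)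
    (hμ : ∀ i : Fin n, μ (X i) = (a⁻¹ ^ ((n : ℤ) - 2 * ((i : ℕ) : ℤ) - 1)) • X i) :
    ∀ p, ε₁ (ε₂ (ε₃ (ε₄ p))) = μ p := by
  have hε₂' : IsExpOf k (fun p => (-1 : k) • D' p) ε₂ := by simpa only [neg_one_smul] using hε₂
  have hS₁ := mapsTo_linearForms_of_isExpOf_raising D hD hε₁
  have hS₂ := mapsTo_linearForms_of_isExpOf_lowering D' hD' hε₂'
  have hS₃ := mapsTo_linearForms_of_isExpOf_raising D hD hε₃
  have hS₄ := mapsTo_linearForms_of_isExpOf_lowering D' hD' hε₄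
  have hX (i : Fin n) : X i ∈ linearForms (Fin n) k := Submodule.subset_span ⟨i, rfl⟩
  have hcomp : ε₁.comp (ε₂.comp (ε₃.comp ε₄)) = μ := by
    refine algHom_ext_of_binaryFormMap (fun i => hS₁ (hS₂ (hS₃ (hS₄ (hX i)))))
      (fun i => hμ i ▸ Submodule.smul_mem _ _ (hX i)) fun p => ?_
    simp only [AlgHom.comp_apply, binaryFormMap_apply_of_isExpOf_raising D hD hε₁,
      binaryFormMap_apply_of_isExpOf_lowering D' hD' hε₂',
      binaryFormMap_apply_of_isExpOf_raising D hD hε₃,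
      binaryFormMap_apply_of_isExpOf_lowering D' hD' hε₄, shearX_shearY_shearX_shearY ha,
      binaryFormMap_apply_of_apply_X_eq_zpow_smul ha hμ]
  exact fun p => DFunLike.congr_fun hcomp p
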